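/- Let M1 = ⟨I1,T⟩ and M2 = ⟨I2,T⟩ be three-valued models of a disjunctive definite program P with the same set T of true atoms. Then ⟨I1 ∩ I2, T⟩ is also a model of P. -/
import Mathlib


open Classical

/-- The three truth values: true, false, inadmissible. -/
inductive TV : Type where
  | t : TV
  | f : TV
  | i : TV
deriving DecidableEq

/-- Kleene strong three-valued conjunction. -/
def TV.and : TV → TV → TV
  | .t, .t => .t
  | .f, _ => .f
  | _, .f => .f
  | _, _ => .i

/-- Kleene strong three-valued disjunction. -/
def TV.or : TV → TV → TV
  | .f, .f => .f
  | .t, _ => .t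
  | _, .t => .t
  | _, _ => .i

/-- Ground body formulas over a set `α` of ground atoms:
built from atoms using binary conjunction and disjunction. -/
inductive Body (α : Type*) : Type _ where
  | atom : α → Body α
  | conj : Body α → Body α → Body α
  | disj : Body α → Body α → Body α

variable {α : Type*}

/-- Value of an atom in the interpretation `⟨I,T⟩` (inadmissible atoms `I`,
true atoms `T`, all other atoms false). -/
noncomputable def atomVal (I T : Set α) (a : α) : TV :=
  if a ∈ T then TV.t else if a ∈ I then TV.i else TV.f

/-- Kleene strong three-valued evaluation of a body formula in `⟨I,T⟩`. -/
noncomputable def beval (I T : Set α) : Body α → TV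
  | .atom a => atomVal I T a
  | .conj b c => TV.and (beval I T b) (beval I T c)
  | .disj b c => TV.or (beval I T b) (beval I T c)

/-- A (ground) disjunctive definite program: a set of ground clause instances
`H ← B`, represented as pairs `(H, B)`. -/
abbrev Program (α : Type*) := Set (α × Body α)

/-- `⟨I,T⟩` is a model of `P`: no clause instance `H ← B` in `P` has `H`
evaluating to F while `B` evaluates to T or I (i.e. head F implies body F). -/
def IsModel (P : Program α) (I T : Set α) : Prop :=
  ∀ c ∈ P, atomVal I T c.1 = TV.f → beval I T c.2 = TV.f


lemma TV.and_eq_f {x y : TV} : TV.and x y = TV.f ↔ x = TV.f ∨ y = TV.f := by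
  cases x <;> cases y <;> simp [TV.and]

lemma TV.or_eq_f {x y : TV} : TV.or x y = TV.f ↔ x = TV.f ∧ y = TV.f := by
  cases x <;> cases y <;> simp [TV.or]

lemma beval_f_mono {α : Type*} {I J T : Set α} (hIJ : I ⊆ J) :
    ∀ b : Body α, beval J T b = TV.f → beval I T b = TV.f := by
  intro b
  induction b with
  | atom a =>
      simp only [beval, atomVal]
      intro h
      split_ifs at h ⊢ with h1 h2 h3
      · exact absurd (hIJ h2) h3
      · rfl
  | conj b c ihb ihc =>
      simp only [beval, TV.and_eq_f]
      rintro (h | h)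
      · exact Or.inl (ihb h)
      · exact Or.inr (ihc h)
  | disj b c ihb ihc =>
      simp only [beval, TV.or_eq_f]
      rintro ⟨hb, hc⟩
      exact ⟨ihb hb, ihc hc⟩

/-- If `⟨I₁,T⟩` and `⟨I₂,T⟩` are models of `P` with the same set
`T` of true atoms, then `⟨I₁ ∩ I₂, T⟩` is also a model of `P`. -/
theorem model_inter_inadmissible {α : Type*} (P : Program α) (I₁ I₂ T : Set α)
    (h₁disj : Disjoint I₁ T) (h₂disj : Disjoint I₂ T)
    (h₁ : IsModel P I₁ T) (h₂ : IsModel P I₂ T) :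
    IsModel P (I₁ ∩ I₂) T := by
  intro c hc hf
  simp only [atomVal] at hf
  split_ifs at hf with h1 h2
  rcases (not_and_or.mp (by simpa using h2) : c.1 ∉ I₁ ∨ c.1 ∉ I₂) with h | h
  · have : atomVal I₁ T c.1 = TV.f := by simp [atomVal, h1, h]
    exact beval_f_mono Set.inter_subset_left c.2 (h₁ c hc this)
  · have : atomVal I₂ T c.1 = TV.f := by simp [atomVal, h1, h]
    exact beval_f_mono Set.inter_subset_right c.2 (h₂ c hc this)
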